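/- In a quantum Mealy machine with state space H_s of dimension d, two initial states ρ₁ and ρ₂ are equivalent (produce identical output distributions for all input sequences) if and only if they are (d²−1)-equivalent (produce identical output distributions for all input sequences of length at most d²−1). -/

import Mathlib

/-!
The functionals `ρ ↦ tr E_{a|π}(ρ)` with `|π| ≤ n` span an increasing chain `V₀ ≤ V₁ ≤ ⋯` of
subspaces of the dual of the `d²`-dimensional space of operators on `H_s`, starting at
`V₀ = span {tr}` of dimension `1`. Since `V_{n+1}` is spanned by `tr` and the pullbacks of `V_n`
along the one-step maps `E_{a,φ}`, the chain is constant from the first `k` with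
`V_{k+1} = V_k` on, and by counting dimensions such a `k ≤ d² - 1` exists. So `ρ₁ - ρ₂` is
annihilated by every `V_n` as soon as it is annihilated by `V_{d²-1}`.
-/

open Matrix Kronecker ComplexOrder

/-- Partial trace over the first (input) factor. -/
noncomputable def ptraceIn {α β : Type*} [Fintype α]
    (A : Matrix (α × β) (α × β) ℂ) : Matrix β β ℂ :=
  fun s t => ∑ i, A (i, s) (i, t)

/-- One-step super-operator `E_{a|σ}` of a quantum Mealy machine `(H_in, H_s, U, M)`
with a general (density-operator) input `σ`:
`E_{a|σ}(ρ) = tr_{H_in}[(M_a ⊗ I) U (σ ⊗ ρ) U† (M_a† ⊗ I)]`. -/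
noncomputable def stepD {α β O : Type*} [Fintype α] [Fintype β] [DecidableEq β]
    (U : Matrix (α × β) (α × β) ℂ) (M : O → Matrix α α ℂ)
    (σ : Matrix α α ℂ) (a : O) (ρ : Matrix β β ℂ) : Matrix β β ℂ :=
  ptraceIn ((M a ⊗ₖ (1 : Matrix β β ℂ)) * U * (σ ⊗ₖ ρ) * Uᴴ *
    ((M a)ᴴ ⊗ₖ (1 : Matrix β β ℂ)))

/-- One-step super-operator `E_{a,φ}` with a pure input state `|φ⟩`. -/
noncomputable def stepP {α β O : Type*} [Fintype α] [Fintype β] [DecidableEq β]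
    (U : Matrix (α × β) (α × β) ℂ) (M : O → Matrix α α ℂ)
    (φ : α → ℂ) (a : O) (ρ : Matrix β β ℂ) : Matrix β β ℂ :=
  stepD U M (vecMulVec φ (star φ)) a ρ

/-- `E_{a|π}` for an input sequence of density operators paired with outcomes. -/
noncomputable def runD {α β O : Type*} [Fintype α] [Fintype β] [DecidableEq β]
    (U : Matrix (α × β) (α × β) ℂ) (M : O → Matrix α α ℂ)
    (l : List (Matrix α α ℂ × O)) (ρ : Matrix β β ℂ) : Matrix β β ℂ :=
  l.foldl (fun acc p => stepD U M p.1 p.2 acc) ρ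

/-- `E_{a|π}` for an input sequence of pure states paired with outcomes. -/
noncomputable def runP {α β O : Type*} [Fintype α] [Fintype β] [DecidableEq β]
    (U : Matrix (α × β) (α × β) ℂ) (M : O → Matrix α α ℂ)
    (l : List ((α → ℂ) × O)) (ρ : Matrix β β ℂ) : Matrix β β ℂ :=
  l.foldl (fun acc p => stepP U M p.1 p.2 acc) ρ

theorem Nat.exists_le_sub_apply_zero_apply_succ_le {g : ℕ → ℕ} {d : ℕ} (hd : ∀ n, g n ≤ d) :
    ∃ k ≤ d - g 0, g (k + 1) ≤ g k := by
  by_contra! h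
  have hgrowth : ∀ k ≤ d - g 0 + 1, g 0 + k ≤ g k := by
    intro k
    induction k with
    | zero => simp
    | succ k ih => intro hk; have := h k (by omega); have := ih (by omega); omega
  have := hgrowth (d - g 0 + 1) le_rfl
  have := hd (d - g 0 + 1)
  omega

section WordFunctional

variable {K V ι : Type*} [Field K] [AddCommGroup V] [Module K V]
  (T : ι → V →ₗ[K] V) (f : Module.Dual K V)

/-- The letters act in list order: `wordFunctional T f [i₁, …, iₙ] = f ∘ T iₙ ∘ ⋯ ∘ T i₁`,
as in the fold defining `runP`. -/
def wordFunctional : List ι → Module.Dual K V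
  | [] => f
  | i :: w => (wordFunctional w).comp (T i)

theorem wordFunctional_cons (i : ι) (w : List ι) :
    wordFunctional T f (i :: w) = (wordFunctional T f w).comp (T i) := rfl

theorem wordFunctional_zero (w : List ι) : wordFunctional T 0 w = 0 := by
  induction w with
  | nil => rfl
  | cons i w ih => rw [wordFunctional_cons, ih, LinearMap.zero_comp]

def wordSpan (s : Set ι) (n : ℕ) : Submodule K (Module.Dual K V) :=
  Submodule.span K
    {g | ∃ w : List ι, (∀ i ∈ w, i ∈ s) ∧ w.length ≤ n ∧ wordFunctional T f w = g}

variable {T f} {s : Set ι}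

theorem wordFunctional_mem_wordSpan {w : List ι} (hw : ∀ i ∈ w, i ∈ s) {n : ℕ}
    (hn : w.length ≤ n) : wordFunctional T f w ∈ wordSpan T f s n :=
  Submodule.subset_span ⟨w, hw, hn, rfl⟩

theorem wordSpan_mono : Monotone (wordSpan T f s) := fun _ _ hmn =>
  Submodule.span_mono fun _ ⟨w, hw, hn, hg⟩ => ⟨w, hw, hn.trans hmn, hg⟩

theorem wordSpan_zero : wordSpan T f s 0 = K ∙ f := by
  rw [wordSpan]
  congr 1
  ext g
  simp [List.length_eq_zero_iff, wordFunctional, eq_comm]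

theorem map_lcomp_wordSpan_le {i : ι} (hi : i ∈ s) (n : ℕ) :
    (wordSpan T f s n).map (LinearMap.lcomp K K (T i)) ≤ wordSpan T f s (n + 1) := by
  rw [wordSpan, Submodule.map_span, Submodule.span_le]
  rintro _ ⟨_, ⟨w, hw, hn, rfl⟩, rfl⟩
  refine wordFunctional_mem_wordSpan (w := i :: w) ?_ (by simpa using hn)
  simpa [hi] using hw

theorem wordSpan_le_of_succ_le {k : ℕ} (hk : wordSpan T f s (k + 1) ≤ wordSpan T f s k)
    (n : ℕ) :
    wordSpan T f s n ≤ wordSpan T f s k := by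
  induction n with
  | zero => exact wordSpan_mono (Nat.zero_le k)
  | succ n ih =>
    rw [wordSpan, Submodule.span_le]
    rintro _ ⟨_ | ⟨i, w⟩, hw, hn, rfl⟩
    · exact wordFunctional_mem_wordSpan hw (Nat.zero_le k)
    · have hi : i ∈ s := hw i List.mem_cons_self
      have hw' : ∀ j ∈ w, j ∈ s := fun j hj => hw j (List.mem_cons_of_mem i hj)
      have hwk := ih (wordFunctional_mem_wordSpan hw' (by simpa using hn))
      exact hk (map_lcomp_wordSpan_le hi k (Submodule.mem_map_of_mem hwk))

variable [FiniteDimensional K V]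

theorem exists_wordSpan_succ_le (hf : f ≠ 0) :
    ∃ k ≤ Module.finrank K V - 1, wordSpan T f s (k + 1) ≤ wordSpan T f s k := by
  obtain ⟨k, hk, hrank⟩ := Nat.exists_le_sub_apply_zero_apply_succ_le
    (g := fun n => Module.finrank K (wordSpan T f s n)) (d := Module.finrank K V)
    fun n => Subspace.dual_finrank_eq (K := K) (V := V) ▸ Submodule.finrank_le _
  refine ⟨k, ?_, (Submodule.eq_of_le_of_finrank_le (wordSpan_mono k.le_succ) hrank).ge⟩
  rwa [wordSpan_zero, finrank_span_singleton hf] at hk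

theorem wordFunctional_apply_eq_zero_of_forall_length_le {x : V}
    (hx : ∀ w : List ι, (∀ i ∈ w, i ∈ s) → w.length ≤ Module.finrank K V - 1 →
      wordFunctional T f w x = 0)
    {w : List ι} (hw : ∀ i ∈ w, i ∈ s) : wordFunctional T f w x = 0 := by
  rcases eq_or_ne f 0 with rfl | hf
  · simp [wordFunctional_zero]
  obtain ⟨k, hk, hstab⟩ := exists_wordSpan_succ_le (T := T) (s := s) hf
  have hker : wordSpan T f s (Module.finrank K V - 1) ≤
      LinearMap.ker (Module.Dual.eval K V x) := by
    rw [wordSpan, Submodule.span_le]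
    rintro _ ⟨w, hw, hn, rfl⟩
    exact hx w hw hn
  exact hker (wordSpan_mono hk (wordSpan_le_of_succ_le hstab w.length
    (wordFunctional_mem_wordSpan hw le_rfl)))

end WordFunctional

section QuantumMealy

variable {α β O : Type*} [Fintype α]

theorem ptraceIn_add (A B : Matrix (α × β) (α × β) ℂ) :
    ptraceIn (A + B) = ptraceIn A + ptraceIn B := by
  ext s t
  simp [ptraceIn, Finset.sum_add_distrib]

theorem ptraceIn_smul (c : ℂ) (A : Matrix (α × β) (α × β) ℂ) :
    ptraceIn (c • A) = c • ptraceIn A := by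
  ext s t
  simp [ptraceIn, Finset.mul_sum]

variable [Fintype β] [DecidableEq β]

noncomputable def stepDₗ (U : Matrix (α × β) (α × β) ℂ) (M : O → Matrix α α ℂ)
    (σ : Matrix α α ℂ) (a : O) : Matrix β β ℂ →ₗ[ℂ] Matrix β β ℂ where
  toFun := stepD U M σ a
  map_add' ρ ρ' := by
    simp only [stepD, kronecker_add, mul_add, add_mul, ptraceIn_add]
  map_smul' c ρ := by
    simp only [stepD, kronecker_smul, mul_smul_comm, smul_mul_assoc, ptraceIn_smul,
      RingHom.id_apply]

noncomputable def stepPₗ (U : Matrix (α × β) (α × β) ℂ) (M : O → Matrix α α ℂ)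
    (p : (α → ℂ) × O) : Matrix β β ℂ →ₗ[ℂ] Matrix β β ℂ :=
  stepDₗ U M (vecMulVec p.1 (star p.1)) p.2

theorem trace_runP_eq_wordFunctional (U : Matrix (α × β) (α × β) ℂ) (M : O → Matrix α α ℂ)
    (l : List ((α → ℂ) × O)) (ρ : Matrix β β ℂ) :
    (runP U M l ρ).trace = wordFunctional (stepPₗ U M) (traceLinearMap β ℂ ℂ) l ρ := by
  induction l generalizing ρ with
  | nil => rfl
  | cons p l ih => exact ih (stepP U M p.1 p.2 ρ)

end QuantumMealy

theorem equiv_iff_dsq_sub_one_equiv_general (di ds : ℕ) (O : Type)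
    (U : Matrix (Fin di × Fin ds) (Fin di × Fin ds) ℂ)
    (M : O → Matrix (Fin di) (Fin di) ℂ)
    (ρ₁ ρ₂ : Matrix (Fin ds) (Fin ds) ℂ) :
    (∀ l : List ((Fin di → ℂ) × O), (∀ p ∈ l, ∑ i, ‖p.1 i‖ ^ 2 = 1) →
        (runP U M l ρ₁).trace = (runP U M l ρ₂).trace) ↔
    (∀ l : List ((Fin di → ℂ) × O), (∀ p ∈ l, ∑ i, ‖p.1 i‖ ^ 2 = 1) →
        l.length ≤ ds ^ 2 - 1 →
        (runP U M l ρ₁).trace = (runP U M l ρ₂).trace) := by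
  have htrace : ∀ l, (runP U M l ρ₁).trace = (runP U M l ρ₂).trace ↔
      wordFunctional (stepPₗ U M) (traceLinearMap _ ℂ ℂ) l (ρ₁ - ρ₂) = 0 := fun l => by
    rw [map_sub, sub_eq_zero, trace_runP_eq_wordFunctional, trace_runP_eq_wordFunctional]
  have hdim : Module.finrank ℂ (Matrix (Fin ds) (Fin ds) ℂ) = ds ^ 2 := by
    simp [Module.finrank_matrix, sq]
  simp only [htrace]
  refine ⟨fun h l hl _ => h l hl, fun h l hl => ?_⟩
  exact wordFunctional_apply_eq_zero_of_forall_length_le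
    (s := {p : (Fin di → ℂ) × O | ∑ i, ‖p.1 i‖ ^ 2 = 1})
    (hdim ▸ h) hl

/-- Two initial states of a quantum Mealy machine with `d`-dimensional state space are
equivalent iff they are `(d² − 1)`-equivalent. -/
theorem equiv_iff_dsq_sub_one_equiv (di ds : ℕ) (O : Type) [Fintype O]
    (U : Matrix (Fin di × Fin ds) (Fin di × Fin ds) ℂ)
    (hU : U ∈ Matrix.unitaryGroup (Fin di × Fin ds) ℂ)
    (M : O → Matrix (Fin di) (Fin di) ℂ) (hM : ∑ a, (M a)ᴴ * M a = 1)
    (ρ₁ ρ₂ : Matrix (Fin ds) (Fin ds) ℂ)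
    (hρ₁ : ρ₁.PosSemidef) (ht₁ : ρ₁.trace = 1)
    (hρ₂ : ρ₂.PosSemidef) (ht₂ : ρ₂.trace = 1) :
    (∀ l : List ((Fin di → ℂ) × O), (∀ p ∈ l, ∑ i, ‖p.1 i‖ ^ 2 = 1) →
        (runP U M l ρ₁).trace = (runP U M l ρ₂).trace) ↔
    (∀ l : List ((Fin di → ℂ) × O), (∀ p ∈ l, ∑ i, ‖p.1 i‖ ^ 2 = 1) →
        l.length ≤ ds ^ 2 - 1 →
        (runP U M l ρ₁).trace = (runP U M l ρ₂).trace) :=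
  equiv_iff_dsq_sub_one_equiv_general di ds O U M ρ₁ ρ₂
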